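/- arXiv:2603.00209 — 2 statements merged into one kernel-verified Lean document; each statement's English description precedes it below -/
import Mathlib

section
/- Let a and b be real numbers with a < b, let n be a natural number, and let x_0, …, x_n be pairwise distinct real numbers. For each k define the Lagrange basis polynomial l_k(x) = Π_{λ ≠ k} (x − x_λ)/(x_k − x_λ). Then the (n+1)×(n+1) matrix L with entries L_{jk} = ∫_a^b x^j l_k(x) dx, 0 ≤ j, k ≤ n, is invertible. -/
open Polynomial MeasureTheory Function intervalIntegral Finset ENNReal

/-- For `a < b` and pairwise distinct nodes `x 0, …, x n` with Lagrange basis functions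
`l k (t) = ∏_{λ ≠ k} (t - x λ)/(x k - x λ)`, the matrix of raw moments
`L j k = ∫ t in a..b, t^j * l k (t) dt` is invertible. -/
theorem lagrange_moment_matrix_isUnit (a b : ℝ) (hab : a < b) (n : ℕ)
    (x : Fin (n + 1) → ℝ) (hx : Function.Injective x) :
    IsUnit
      (Matrix.of fun j k : Fin (n + 1) =>
        ∫ t in a..b,
          t ^ (j : ℕ) * ∏ lam ∈ Finset.univ.erase k, (t - x lam) / (x k - x lam)) := by
  set L : Matrix (Fin (n+1)) (Fin (n+1)) ℝ := Matrix.of fun j k : Fin (n + 1) =>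
      ∫ t in a..b,
        t ^ (j : ℕ) * ∏ lam ∈ Finset.univ.erase k, (t - x lam) / (x k - x lam) with hL
  -- the Lagrange basis functions, continuity
  set l : Fin (n+1) → ℝ → ℝ := fun k t => ∏ lam ∈ Finset.univ.erase k, (t - x lam) / (x k - x lam)
    with hl
  have hcl : ∀ k, Continuous (l k) := fun k =>
    continuous_finset_prod _ fun lam _ => (continuous_id.sub continuous_const).div_const _
  rw [← Matrix.vecMul_injective_iff_isUnit]
  have key : ∀ u : Fin (n+1) → ℝ, Matrix.vecMul u L = 0 → u = 0 := by
    intro u hu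
    -- the polynomial with coefficients u
    set q : Polynomial ℝ := ∑ j : Fin (n+1), C (u j) * X ^ (j : ℕ) with hqdef
    have heval : ∀ t : ℝ, q.eval t = ∑ j : Fin (n+1), u j * t ^ (j : ℕ) := by
      intro t; simp [hqdef, eval_finset_sum]
    have hcq : Continuous fun t => q.eval t := q.continuous
    have hdeg : q.degree < (Finset.univ : Finset (Fin (n+1))).card := by
      simp only [Finset.card_univ, Fintype.card_fin]
      refine lt_of_le_of_lt (degree_sum_le _ _) ?_
      rw [Finset.sup_lt_iff (by exact_mod_cast WithBot.bot_lt_coe (n+1))]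
      intro j _
      refine lt_of_le_of_lt (degree_C_mul_X_pow_le _ _) ?_
      exact_mod_cast Nat.lt_succ_of_le (Fin.is_le j)
    have hinj : Set.InjOn x (Finset.univ : Finset (Fin (n+1))) := hx.injOn
    -- Lagrange interpolation identity
    have hbasis : ∀ k t, (Lagrange.basis Finset.univ x k).eval t = l k t := by
      intro k t
      simp [Lagrange.basis, Lagrange.basisDivisor, hl, eval_prod, div_eq_mul_inv, mul_comm]
    have hLag : ∀ t : ℝ, q.eval t = ∑ k : Fin (n+1), q.eval (x k) * l k t := by
      intro t
      conv_lhs => rw [Lagrange.eq_interpolate hinj hdeg]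
      simp [Lagrange.interpolate_apply, eval_finset_sum, hbasis]
    -- integrability facts
    have hint : ∀ (j : ℕ) k, IntervalIntegrable (fun t => t ^ j * l k t) volume a b :=
      fun j k => ((continuous_pow j).mul (hcl k)).intervalIntegrable a b
    have hintq : ∀ k, IntervalIntegrable (fun t => q.eval t * l k t) volume a b :=
      fun k => (hcq.mul (hcl k)).intervalIntegrable a b
    -- Step A : ∫ q * l k = 0 for each k
    have hA : ∀ k, (∫ t in a..b, q.eval t * l k t) = 0 := by
      intro k
      have hk : ∑ j : Fin (n+1), u j * ∫ t in a..b, t ^ (j : ℕ) * l k t = 0 := by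
        simpa [Matrix.vecMul, dotProduct, hL, hl] using congrFun hu k
      calc (∫ t in a..b, q.eval t * l k t)
          = ∫ t in a..b, ∑ j : Fin (n+1), u j * (t ^ (j : ℕ) * l k t) := by
            congr 1; funext t
            rw [heval, Finset.sum_mul]
            exact Finset.sum_congr rfl fun j _ => by ring
        _ = ∑ j : Fin (n+1), ∫ t in a..b, u j * (t ^ (j : ℕ) * l k t) :=
            intervalIntegral.integral_finset_sum
              (fun j _ => (hint (j : ℕ) k).const_mul (u j))
        _ = ∑ j : Fin (n+1), u j * ∫ t in a..b, t ^ (j : ℕ) * l k t :=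
            Finset.sum_congr rfl fun j _ => intervalIntegral.integral_const_mul _ _
        _ = 0 := hk
    -- Step B : ∫ q^2 = 0
    have hB : (∫ t in a..b, (q.eval t) ^ 2) = 0 := by
      have expand : ∀ t : ℝ, (q.eval t) ^ 2
          = ∑ k : Fin (n+1), q.eval (x k) * (q.eval t * l k t) := by
        intro t
        calc (q.eval t) ^ 2 = (∑ k : Fin (n+1), q.eval (x k) * l k t) * q.eval t := by
              rw [← hLag t]; ring
          _ = ∑ k : Fin (n+1), q.eval (x k) * (q.eval t * l k t) := by
              rw [Finset.sum_mul]
              exact Finset.sum_congr rfl fun k _ => by ring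
      calc (∫ t in a..b, (q.eval t) ^ 2)
          = ∫ t in a..b, ∑ k : Fin (n+1), q.eval (x k) * (q.eval t * l k t) := by
            congr 1; funext t; exact expand t
        _ = ∑ k : Fin (n+1), ∫ t in a..b, q.eval (x k) * (q.eval t * l k t) :=
            intervalIntegral.integral_finset_sum
              (fun k _ => (hintq k).const_mul (q.eval (x k)))
        _ = 0 := by
            refine Finset.sum_eq_zero fun k _ => ?_
            rw [intervalIntegral.integral_const_mul, hA k, mul_zero]
    -- Step C : q = 0
    have hq0 : q = 0 := by
      by_contra hq
      have hpos : 0 < ∫ t in a..b, (q.eval t) ^ 2 := by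
        rw [intervalIntegral.integral_pos_iff_support_of_nonneg_ae
          (Filter.Eventually.of_forall fun t => sq_nonneg _)
          ((hcq.pow 2).intervalIntegrable a b)]
        refine ⟨hab, ?_⟩
        have hsub : Set.Ioc a b \ {t : ℝ | q.IsRoot t}
            ⊆ support (fun t => (q.eval t) ^ 2) ∩ Set.Ioc a b := by
          rintro t ⟨ht, hr⟩
          exact ⟨pow_ne_zero _ fun h => hr h, ht⟩
        calc (0 : ℝ≥0∞) < ENNReal.ofReal (b - a) := by
                simp [hab, sub_pos.mpr hab]
          _ = volume (Set.Ioc a b \ {t : ℝ | q.IsRoot t}) := by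
                rw [measure_diff_null ((Polynomial.finite_setOf_isRoot hq).measure_zero volume),
                  Real.volume_Ioc]
          _ ≤ volume (support (fun t => (q.eval t) ^ 2) ∩ Set.Ioc a b) :=
                measure_mono hsub
      exact absurd hB (ne_of_gt hpos)
    -- Step D : u = 0
    funext j
    have := congrArg (fun p : Polynomial ℝ => p.coeff (j : ℕ)) hq0
    simp only [hqdef, finset_sum_coeff, coeff_C_mul, coeff_X_pow, coeff_zero] at this
    rw [Finset.sum_eq_single j (fun i _ hij => by
        simp [Fin.val_eq_val, (Ne.symm hij)]) (by simp)] at this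
    simpa using this
  intro v w hvw
  have hvw' : Matrix.vecMul v L = Matrix.vecMul w L := hvw
  have : Matrix.vecMul (v - w) L = 0 := by
    rw [Matrix.sub_vecMul, hvw', sub_self]
  have := key _ this
  exact sub_eq_zero.mp (by funext i; exact congrFun this i)
end

section
/- Let a and b be real numbers with a < b, let n be a natural number, let x_0, …, x_n be pairwise distinct real numbers with Lagrange basis polynomials l_k(x) = Π_{λ ≠ k} (x − x_λ)/(x_k − x_λ), and let E ∈ ℝ^{n+1}. Let M be the matrix with M_{jk} = (b^{j+k+1} − a^{j+k+1})/(j+k+1) and L the matrix with L_{jk} = ∫_a^b x^j l_k(x) dx. If w ∈ ℝ^{n+1} satisfies M w = E and ω ∈ ℝ^{n+1} satisfies L ω = E, then Σ_{k=0}^{n} w_k x^k = Σ_{k=0}^{n} ω_k l_k(x) as polynomials. -/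
/-!
Both reconstructions are polynomials of degree at most `n` whose moments `∫_a^b t^j p(t) dt`,
`j ≤ n`, are the prescribed `E j`. Their difference `d` has degree at most `n` and vanishing
moments, so it is orthogonal to itself: `∫_a^b d² = 0`. A nonzero polynomial vanishes only at
finitely many points, so on a nondegenerate interval this forces `d = 0`.
-/

open Polynomial MeasureTheory intervalIntegral

namespace Polynomial

variable {a b : ℝ}

theorem integral_mul_eval_sum {ι : Type*} (s : Finset ι) {g : ℝ → ℝ}
    (hg : IntervalIntegrable g volume a b) (c : ι → ℝ) (f : ι → ℝ[X]) :
    ∫ t in a..b, g t * (∑ k ∈ s, C (c k) * f k).eval t =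
      ∑ k ∈ s, c k * ∫ t in a..b, g t * (f k).eval t := by
  simp only [eval_finsetSum, eval_mul, eval_C, Finset.mul_sum, mul_left_comm (g _)]
  rw [integral_finsetSum fun k _ =>
    (hg.mul_continuousOn (f k).continuous.continuousOn).const_mul (c k)]
  simp only [intervalIntegral.integral_const_mul]

theorem integral_sq_eval_pos {d : ℝ[X]} (hd : d ≠ 0) (hab : a < b) :
    0 < ∫ t in a..b, d.eval t ^ 2 := by
  rw [integral_pos_iff_support_of_nonneg_ae (ae_of_all _ fun t => sq_nonneg _)
    ((d.continuous.pow 2).intervalIntegrable a b)]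
  have hroots : volume {t | d.IsRoot t} = 0 := (finite_setOfPred_isRoot hd).measure_zero _
  refine ⟨hab, ?_⟩
  calc 0 < volume (Set.Ioc a b) := by simp [hab]
    _ = volume (Set.Ioc a b \ {t | d.IsRoot t}) := (measure_sdiff_null hroots).symm
    _ ≤ volume ((fun t => d.eval t ^ 2).support ∩ Set.Ioc a b) :=
      measure_mono fun t ⟨hI, hr⟩ => ⟨pow_ne_zero 2 hr, hI⟩

theorem eq_zero_of_integral_pow_mul_eval_eq_zero (hab : a < b) {n : ℕ} {d : ℝ[X]}
    (hd : d.natDegree ≤ n) (h : ∀ j ≤ n, ∫ t in a..b, t ^ j * d.eval t = 0) : d = 0 := by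
  by_contra hne
  have hsq : ∫ t in a..b, d.eval t ^ 2 = 0 := calc
    ∫ t in a..b, d.eval t ^ 2
        = ∫ t in a..b, d.eval t * (∑ i ∈ Finset.range (n + 1), C (d.coeff i) * X ^ i).eval t := by
          rw [← as_sum_range_C_mul_X_pow' d (Nat.lt_succ_of_le hd)]; simp only [sq]
    _ = ∑ i ∈ Finset.range (n + 1), d.coeff i * ∫ t in a..b, t ^ i * d.eval t := by
          rw [integral_mul_eval_sum _ (d.continuous.intervalIntegrable a b)]
          simp only [eval_pow, eval_X, mul_comm (d.eval _)]
    _ = 0 := Finset.sum_eq_zero fun i hi => by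
          rw [h i (Nat.le_of_lt_succ (Finset.mem_range.1 hi)), mul_zero]
  exact (integral_sq_eval_pos hne hab).ne' hsq

theorem eq_of_integral_pow_mul_eval_eq (hab : a < b) {n : ℕ} {p q : ℝ[X]}
    (hp : p.natDegree ≤ n) (hq : q.natDegree ≤ n)
    (h : ∀ j ≤ n, ∫ t in a..b, t ^ j * p.eval t = ∫ t in a..b, t ^ j * q.eval t) : p = q := by
  refine sub_eq_zero.1 <| eq_zero_of_integral_pow_mul_eval_eq_zero hab
    ((natDegree_sub_le p q).trans (max_le hp hq)) fun j hj => ?_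
  have hint : ∀ r : ℝ[X], IntervalIntegrable (fun t => t ^ j * r.eval t) volume a b :=
    fun r => ((continuous_pow j).mul r.continuous).intervalIntegrable a b
  simp only [eval_sub, mul_sub]
  rw [integral_sub (hint p) (hint q), h j hj, sub_self]

theorem integral_pow_mul_eval_X_pow (j k : ℕ) :
    ∫ t in a..b, t ^ j * (X ^ k : ℝ[X]).eval t =
      (b ^ (j + k + 1) - a ^ (j + k + 1)) / ((j + k + 1 : ℕ) : ℝ) := by
  simp [← pow_add, integral_pow]

end Polynomial

/-- For the same bin `[a, b]` (with `a < b`) and the same prescribed moment vector `E`,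
the piecewise monomial reconstruction (coefficients `w` solving `M w = E` for the
monomial moment matrix `M`) and the piecewise Lagrange reconstruction (coefficients `ω`
solving `L ω = E` for the Lagrange moment matrix `L` built from pairwise distinct nodes)
produce the same polynomial: `∑ k, w k • X^k = ∑ k, ω k • l k`. -/
theorem monomial_and_lagrange_reconstructions_agree (a b : ℝ) (hab : a < b) (n : ℕ)
    (x : Fin (n + 1) → ℝ) (hx : Function.Injective x)
    (l : Fin (n + 1) → Polynomial ℝ)
    (hl : ∀ k, l k = ∏ lam ∈ Finset.univ.erase k,
      Polynomial.C ((x k - x lam)⁻¹) * (Polynomial.X - Polynomial.C (x lam)))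
    (E w ω : Fin (n + 1) → ℝ)
    (hw : Matrix.mulVec
        (Matrix.of fun j k : Fin (n + 1) =>
          (b ^ ((j : ℕ) + (k : ℕ) + 1) - a ^ ((j : ℕ) + (k : ℕ) + 1)) /
            (((j : ℕ) + (k : ℕ) + 1 : ℕ) : ℝ)) w = E)
    (hω : Matrix.mulVec
        (Matrix.of fun j k : Fin (n + 1) =>
          ∫ t in a..b, t ^ (j : ℕ) * (l k).eval t) ω = E) :
    ∑ k : Fin (n + 1), Polynomial.C (w k) * Polynomial.X ^ (k : ℕ) =
      ∑ k : Fin (n + 1), Polynomial.C (ω k) * l k := by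
  have hl_basis : ∀ k, l k = Lagrange.basis Finset.univ x k := hl
  have hl_deg : ∀ k, (l k).natDegree ≤ n := fun k => by
    simp [hl_basis, Lagrange.natDegree_basis hx.injOn (Finset.mem_univ k)]
  refine eq_of_integral_pow_mul_eval_eq hab
    (natDegree_sum_le_of_forall_le _ _ fun k _ => (natDegree_C_mul_X_pow_le _ _).trans k.is_le)
    (natDegree_sum_le_of_forall_le _ _ fun k _ => (natDegree_C_mul_le _ _).trans (hl_deg k))
    fun j hj => ?_
  have hintegrable := (continuous_pow j).intervalIntegrable (μ := volume) a b
  rw [integral_mul_eval_sum _ hintegrable, integral_mul_eval_sum _ hintegrable]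
  simp only [integral_pow_mul_eval_X_pow]
  have hM := congrFun hw ⟨j, Nat.lt_succ_of_le hj⟩
  have hL := congrFun hω ⟨j, Nat.lt_succ_of_le hj⟩
  simp only [Matrix.mulVec, dotProduct, Matrix.of_apply] at hM hL
  rw [← hL] at hM
  simpa only [mul_comm (w _), mul_comm (ω _)] using hM
end
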